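/- Let d ≥ 1, let 𝒟 be a dyadic grid in ℝ^d, let Φ be a Young function with complementary function Φ̄, and let f⃗ be a bounded, compactly supported, ℂ^n-valued measurable function. Set a := 2^{d+3}. For each k ∈ ℤ, let 𝒮^k be the collection of maximal cubes Q ∈ 𝒟 satisfying ‖|f⃗|‖_{Φ̄,Q} > a^k (such maximal cubes exist since ‖|f⃗|‖_{Φ̄,Q} → 0 as |Q| → ∞), and set Ω_k := ⋃_{P∈𝒮^k} P. Then for every k ∈ ℤ and every Q ∈ 𝒮^k one has |Q ∩ Ω_{k+1}| ≤ |Q|/2; consequently the family 𝒮 := ⋃_{k∈ℤ} 𝒮^k is a 1/2-sparse family. -/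

import Mathlib

open MeasureTheory ENNReal
open scoped ComplexOrder

noncomputable section

namespace Paper

variable {d n : ℕ}

/-- `ℝ^d` with the Euclidean norm. -/
abbrev Rd (d : ℕ) := EuclideanSpace ℝ (Fin d)

/-- `ℂ^n` with the Euclidean norm. -/
abbrev Cn (n : ℕ) := EuclideanSpace ℂ (Fin n)

/-- `n × n` complex matrices. -/
abbrev Mat (n : ℕ) := Matrix (Fin n) (Fin n) ℂ

/-- The conjugate (dual) exponent `p' = p/(p-1)`. -/
def dualExp (p : ℝ) : ℝ := p / (p - 1)

/-- A (half-open) axis-parallel cube in `ℝ^d`, given by its center and side length. -/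
structure Cube (d : ℕ) where
  center : Rd d
  side : ℝ
  side_pos : 0 < side

/-- The set underlying a cube. -/
def Cube.carrier (Q : Cube d) : Set (Rd d) :=
  {y | ∀ i, Q.center i - Q.side / 2 ≤ y i ∧ y i < Q.center i + Q.side / 2}

/-- The Lebesgue measure `|Q|` of a cube. -/
def Cube.vol (Q : Cube d) : ℝ≥0∞ := volume Q.carrier

/-- A critical radius function on `ℝ^d`. -/
def IsCriticalRadius (ρ : Rd d → ℝ) : Prop :=
  Measurable ρ ∧ (∀ x, 0 < ρ x) ∧
    ∃ C₀ N₀ : ℝ, 0 < C₀ ∧ 0 < N₀ ∧ ∀ x y : Rd d,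
      C₀⁻¹ * ρ x * (1 + dist x y / ρ x) ^ (-N₀) ≤ ρ y ∧
      ρ y ≤ C₀ * ρ x * (1 + dist x y / ρ x) ^ (N₀ / (N₀ + 1))

/-- `ψ_θ(Q) = (1 + l_Q/ρ(x_Q))^θ`. -/
def psi (θ : ℝ) (ρ : Rd d → ℝ) (Q : Cube d) : ℝ := (1 + Q.side / ρ Q.center) ^ θ

/-- `ρ̃(Q) = sup_{x ∈ Q} ρ(x)`. -/
def rhoSup (ρ : Rd d → ℝ) (Q : Cube d) : ℝ := sSup (ρ '' Q.carrier)

/-- `ψ̃_θ(Q) = (1 + l_Q/ρ̃(Q))^θ`. -/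
def psiT (θ : ℝ) (ρ : Rd d → ℝ) (Q : Cube d) : ℝ := (1 + Q.side / rhoSup ρ Q) ^ θ

/-- `ψ(Q)·|Q|`, as an extended nonnegative real. -/
def wvol (w : Cube d → ℝ) (Q : Cube d) : ℝ≥0∞ := ENNReal.ofReal (w Q) * Q.vol

/-- The action of an `n × n` matrix on `ℂ^n` (with the Euclidean norm). -/
def mulVecE (A : Mat n) (v : Cn n) : Cn n :=
  (WithLp.equiv 2 (Fin n → ℂ)).symm (A.mulVec (WithLp.equiv 2 (Fin n → ℂ) v))

/-- The operator norm `|A|_op` of a matrix acting on `ℓ²`. -/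
def opNorm (A : Mat n) : ℝ := ⨆ v : Cn n, ‖mulVecE A v‖ / ‖v‖

/-- The real power `A^r` of a Hermitian matrix, defined through the spectral
decomposition (junk value `0` if `A` is not Hermitian). -/
def rpowMat (A : Mat n) (r : ℝ) : Mat n :=
  if hA : A.IsHermitian then
    (hA.eigenvectorUnitary : Mat n) *
      Matrix.diagonal (fun i => ((hA.eigenvalues i ^ r : ℝ) : ℂ)) *
      (star (hA.eigenvectorUnitary : Mat n))
  else 0

/-- A matrix weight: measurable, a.e. positive definite (hence Hermitian), with locally
integrable entries. -/
def IsMatrixWeight (W : Rd d → Mat n) : Prop :=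
  (∀ i j, Measurable fun x => W x i j) ∧
  (∀ i j, LocallyIntegrable (fun x => W x i j) volume) ∧
  ∀ᵐ x : Rd d, (W x).PosDef

/-- The matrix `U(x)^{1/q} V(y)^{-1/q}`. -/
def UV (q : ℝ) (U V : Rd d → Mat n) (x y : Rd d) : Mat n :=
  rpowMat (U x) (1/q) * rpowMat (V y) (-(1/q))

/-- The two-weight matrix `A_{p,q}` constant with respect to a cube weight `w`
(the case `p = 1` is interpreted with the essential supremum). -/
def pairApqOf (w : Cube d → ℝ) (p q : ℝ) (U V : Rd d → Mat n) : ℝ≥0∞ :=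
  if p = 1 then
    ⨆ Q : Cube d, essSup
      (fun y => (wvol w Q)⁻¹ * ∫⁻ x in Q.carrier, ENNReal.ofReal (opNorm (UV q U V x y) ^ q))
      (volume.restrict Q.carrier)
  else
    ⨆ Q : Cube d,
      (wvol w Q)⁻¹ * ∫⁻ x in Q.carrier,
        ((wvol w Q)⁻¹ * ∫⁻ y in Q.carrier,
          ENNReal.ofReal (opNorm (UV q U V x y) ^ dualExp p)) ^ (q / dualExp p)

/-- The constant `[U,V]_{𝒜_{p,q}^{ρ,θ}}`. -/
def pairApq (ρ : Rd d → ℝ) (θ p q : ℝ) (U V : Rd d → Mat n) : ℝ≥0∞ :=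
  pairApqOf (psi θ ρ) p q U V

/-- The one-weight constant `[W]_{𝒜_{p,q}^{ρ,θ}}`. -/
def matApq (ρ : Rd d → ℝ) (θ p q : ℝ) (W : Rd d → Mat n) : ℝ≥0∞ :=
  pairApq ρ θ p q W W

/-- The one-weight constant `[W]_{Ã_{p,q}^{ρ,θ}}` (with `ψ̃` in place of `ψ`). -/
def matApqT (ρ : Rd d → ℝ) (θ p q : ℝ) (W : Rd d → Mat n) : ℝ≥0∞ :=
  pairApqOf (psiT θ ρ) p q W W

/-- The scalar constant `[ω]_{A_{p,q}^{ρ,θ}}` (the case `p = 1` interpreted as usual). -/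
def scalarApq (ρ : Rd d → ℝ) (θ p q : ℝ) (ω : Rd d → ℝ) : ℝ≥0∞ :=
  if p = 1 then
    ⨆ Q : Cube d, essSup
      (fun y => (ENNReal.ofReal (ω y))⁻¹ *
        ((wvol (psi θ ρ) Q)⁻¹ * ∫⁻ x in Q.carrier, ENNReal.ofReal (ω x)))
      (volume.restrict Q.carrier)
  else
    ⨆ Q : Cube d,
      ((wvol (psi θ ρ) Q)⁻¹ * ∫⁻ x in Q.carrier, ENNReal.ofReal (ω x)) *
      ((wvol (psi θ ρ) Q)⁻¹ * ∫⁻ x in Q.carrier,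
        (ENNReal.ofReal (ω x)) ^ (-(dualExp p / q))) ^ (q / dualExp p)

/-- The (unweighted) `L^p` norm of a `ℂ^n`-valued function. -/
def vLp (p : ℝ) (f : Rd d → Cn n) : ℝ≥0∞ := (∫⁻ x, ENNReal.ofReal (‖f x‖ ^ p)) ^ (1/p)

/-- The matrix-weighted norm `‖f‖_{L^p(W^{p/q})} = (∫ |W^{1/q} f|^p)^{1/p}`; for `p = q`
this is `‖f‖_{L^q(W)}`. -/
def wLp (p q : ℝ) (W : Rd d → Mat n) (f : Rd d → Cn n) : ℝ≥0∞ :=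
  (∫⁻ x, ENNReal.ofReal (‖mulVecE (rpowMat (W x) (1/q)) (f x)‖ ^ p)) ^ (1/p)

/-- The `L^q` norm of an `ℝ≥0∞`-valued function. -/
def eLq (q : ℝ) (g : Rd d → ℝ≥0∞) : ℝ≥0∞ := (∫⁻ x, g x ^ q) ^ (1/q)

/-- The weak `L^{q,∞}` quasinorm of an `ℝ≥0∞`-valued function. -/
def weakLq (q : ℝ) (g : Rd d → ℝ≥0∞) : ℝ≥0∞ :=
  ⨆ lam : {l : ℝ // 0 < l},
    ENNReal.ofReal lam.1 * (volume {x | ENNReal.ofReal lam.1 < g x}) ^ (1/q)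

/-- The two-weight fractional maximal operator `M_{U,V,ψ_θ,α}` (sup over all cubes
containing `x`). -/
def MfracPair (ρ : Rd d → ℝ) (θ α q : ℝ) (U V : Rd d → Mat n)
    (f : Rd d → Cn n) (x : Rd d) : ℝ≥0∞ :=
  ⨆ Q : {Q : Cube d // x ∈ Q.carrier},
    (wvol (psi θ ρ) Q.1) ^ (α / (d:ℝ) - 1) *
      ∫⁻ y in Q.1.carrier, ENNReal.ofReal ‖mulVecE (UV q U V x y) (f y)‖

/-- The Gaussian-type upper bound with critical radius decay for a heat kernel. -/
def GaussianUpper (ρ : Rd d → ℝ) (p : ℝ → Rd d → Rd d → ℝ) : Prop :=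
  Measurable (fun z : ℝ × Rd d × Rd d => p z.1 z.2.1 z.2.2) ∧
  ∀ N : ℝ, 0 < N → ∃ c C : ℝ, 0 < c ∧ 0 < C ∧
    ∀ t : ℝ, 0 < t → ∀ x y : Rd d,
      |p t x y| ≤ C * t ^ (-(d:ℝ)/2) * Real.exp (-(dist x y ^ 2) / (c * t)) *
        (1 + Real.sqrt t / ρ x + Real.sqrt t / ρ y) ^ (-N)

/-- `K(x,y) = ∫₀^∞ p_t(x,y) t^{α/2-1} dt`, the kernel of `L^{-α/2}`. -/
def fracIntKer (p : ℝ → Rd d → Rd d → ℝ) (α : ℝ) (x y : Rd d) : ℝ :=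
  ∫ t in Set.Ioi (0:ℝ), p t x y * t ^ (α/2 - 1)

/-- The fractional integral `L^{-α/2} f(x) = ∫₀^∞ (∫ p_t(x,y) f(y) dy) t^{α/2-1} dt`,
acting componentwise on `ℂ^n`-valued functions. -/
def fracInt (p : ℝ → Rd d → Rd d → ℝ) (α : ℝ) (f : Rd d → Cn n) (x : Rd d) : Cn n :=
  (WithLp.equiv 2 (Fin n → ℂ)).symm fun i =>
    ∫ t in Set.Ioi (0:ℝ),
      (∫ y, (p t x y : ℂ) * (WithLp.equiv 2 (Fin n → ℂ)) (f y) i) * ((t ^ (α/2 - 1) : ℝ) : ℂ)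

/-- A Young function. -/
def IsYoung (Φ : ℝ → ℝ) : Prop :=
  ContinuousOn Φ (Set.Ici 0) ∧ MonotoneOn Φ (Set.Ici 0) ∧ ConvexOn ℝ (Set.Ici 0) Φ ∧
    Φ 0 = 0 ∧ Filter.Tendsto (fun t => Φ t / t) Filter.atTop Filter.atTop

/-- The complementary Young function `Φ̄(t) = sup_{s>0} (st - Φ(s))`. -/
def youngConj (Φ : ℝ → ℝ) (t : ℝ) : ℝ := sSup {y | ∃ s : ℝ, 0 < s ∧ y = s * t - Φ s}

/-- The class `B_{p,q}`: `∫₁^∞ A(t)^{q/p} t^{-q-1} dt < ∞`. -/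
def MemB (A : ℝ → ℝ) (p q : ℝ) : Prop :=
  ∫⁻ t in Set.Ioi (1:ℝ), ENNReal.ofReal (A t ^ (q / p) / t ^ (q + 1)) < ⊤

/-- Extension of a Young function to `ℝ≥0∞`. -/
def phiExt (Φ : ℝ → ℝ) (a : ℝ≥0∞) : ℝ≥0∞ :=
  if a = ⊤ then ⊤ else ENNReal.ofReal (Φ a.toReal)

/-- The localized Orlicz norm `‖f‖_{Φ,Q}` of an `ℝ≥0∞`-valued function. -/
def orliczNormE (Φ : ℝ → ℝ) (Q : Cube d) (f : Rd d → ℝ≥0∞) : ℝ≥0∞ :=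
  sInf {l : ℝ≥0∞ | ∃ lam : ℝ, 0 < lam ∧ l = ENNReal.ofReal lam ∧
    ∫⁻ x in Q.carrier, phiExt Φ (f x / ENNReal.ofReal lam) ≤ Q.vol}

/-- A reducing-operator family for `U` (with power `1/q`), with explicit comparison
constants `c₁ ≤ c₂`. -/
def IsReducingFamilyWith (c₁ c₂ q : ℝ) (U : Rd d → Mat n) (R : Cube d → Mat n) : Prop :=
  (∀ Q : Cube d, (R Q).PosDef) ∧
  ∀ (Q : Cube d) (e : Cn n),
    ENNReal.ofReal c₁ *
        (Q.vol⁻¹ * ∫⁻ x in Q.carrier,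
          ENNReal.ofReal (‖mulVecE (rpowMat (U x) (1/q)) e‖ ^ q)) ^ (1/q)
      ≤ ENNReal.ofReal ‖mulVecE (R Q) e‖ ∧
    ENNReal.ofReal ‖mulVecE (R Q) e‖
      ≤ ENNReal.ofReal c₂ *
          (Q.vol⁻¹ * ∫⁻ x in Q.carrier,
            ENNReal.ofReal (‖mulVecE (rpowMat (U x) (1/q)) e‖ ^ q)) ^ (1/q)

/-- The auxiliary maximal operator `M_{𝒰,V,ψ_θ,α}` built from reducing operators. -/
def MfracRed (ρ : Rd d → ℝ) (θ α q : ℝ) (R : Cube d → Mat n) (V : Rd d → Mat n)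
    (f : Rd d → Cn n) (x : Rd d) : ℝ≥0∞ :=
  ⨆ Q : {Q : Cube d // x ∈ Q.carrier},
    (wvol (psi θ ρ) Q.1) ^ (α / (d:ℝ) - 1) *
      ∫⁻ y in Q.1.carrier, ENNReal.ofReal ‖mulVecE (R Q.1 * rpowMat (V y) (-(1/q))) (f y)‖

/-- The auxiliary averaging operator `𝒜_Q^{α,θ}`. -/
def auxAvg (ρ : Rd d → ℝ) (θ α q : ℝ) (R : Cube d → Mat n) (V : Rd d → Mat n)
    (Q : Cube d) (f : Rd d → Cn n) (x : Rd d) : ℝ≥0∞ :=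
  Set.indicator Q.carrier
    (fun _ => (wvol (psi θ ρ) Q) ^ (α / (d:ℝ) - 1) *
      ∫⁻ y in Q.carrier, ENNReal.ofReal ‖mulVecE (R Q * rpowMat (V y) (-(1/q))) (f y)‖) x

/-- The averaging operator `A_Q^{α,θ} f = χ_Q (ψ_θ(Q)|Q|)^{α/d-1} ∫_Q f`. -/
def avgOp (ρ : Rd d → ℝ) (θ α : ℝ) (Q : Cube d) (f : Rd d → Cn n) (x : Rd d) : Cn n :=
  Set.indicator Q.carrier
    (fun _ => ((psi θ ρ Q * Q.vol.toReal) ^ (α / (d:ℝ) - 1)) • ∫ y in Q.carrier, f y) x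

/-- A dyadic grid: all cubes have dyadic side lengths, any two are nested or disjoint,
and those of a fixed side length partition `ℝ^d`. -/
def IsDyadicGrid (𝒟 : Set (Cube d)) : Prop :=
  (∀ Q ∈ 𝒟, ∃ k : ℤ, Q.side = 2 ^ k) ∧
  (∀ Q₁ ∈ 𝒟, ∀ Q₂ ∈ 𝒟,
    Q₁.carrier ⊆ Q₂.carrier ∨ Q₂.carrier ⊆ Q₁.carrier ∨ Disjoint Q₁.carrier Q₂.carrier) ∧
  (∀ k : ℤ, ∀ x : Rd d, ∃! Q : Cube d, Q ∈ 𝒟 ∧ Q.side = 2 ^ k ∧ x ∈ Q.carrier)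

/-- The translated dyadic grid `𝒟^t = {2^{-k}([0,1)^d + m + (-1)^k t)}`. -/
def stdGrid (d : ℕ) (t : Fin d → ℝ) : Set (Cube d) :=
  {Q | ∃ (k : ℤ) (m : Fin d → ℤ), Q.side = (2:ℝ) ^ (-k) ∧
    ∀ i, Q.center i = (2:ℝ) ^ (-k) * ((m i : ℝ) + (-1 : ℝ) ^ k * t i + 1/2)}

/-- Encoding of the parameter set `{0,1/3}^d`. -/
def boolParam (d : ℕ) (t : Fin d → Bool) : Fin d → ℝ := fun i => if t i then 1/3 else 0

/-- The dyadic two-weight fractional maximal operator with `ψ̃`. -/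
def MfracPairD (𝒟 : Set (Cube d)) (ρ : Rd d → ℝ) (θ α q : ℝ) (U V : Rd d → Mat n)
    (f : Rd d → Cn n) (x : Rd d) : ℝ≥0∞ :=
  ⨆ Q : {Q : Cube d // Q ∈ 𝒟 ∧ x ∈ Q.carrier},
    (wvol (psiT θ ρ) Q.1) ^ (α / (d:ℝ) - 1) *
      ∫⁻ y in Q.1.carrier, ENNReal.ofReal ‖mulVecE (UV q U V x y) (f y)‖

/-- The dyadic auxiliary maximal operator (with reducing operators and `ψ̃`). -/
def MfracRedD (𝒟 : Set (Cube d)) (ρ : Rd d → ℝ) (θ α q : ℝ) (R : Cube d → Mat n)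
    (V : Rd d → Mat n) (f : Rd d → Cn n) (x : Rd d) : ℝ≥0∞ :=
  ⨆ Q : {Q : Cube d // Q ∈ 𝒟 ∧ x ∈ Q.carrier},
    (wvol (psiT θ ρ) Q.1) ^ (α / (d:ℝ) - 1) *
      ∫⁻ y in Q.1.carrier, ENNReal.ofReal ‖mulVecE (R Q.1 * rpowMat (V y) (-(1/q))) (f y)‖

/-- The cubes of `𝒟` that are maximal among those on which `F` exceeds `c`. -/
def maximalAbove (𝒟 : Set (Cube d)) (F : Cube d → ℝ≥0∞) (c : ℝ≥0∞) : Set (Cube d) :=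
  {Q | Q ∈ 𝒟 ∧ c < F Q ∧ ∀ Q' ∈ 𝒟, Q.carrier ⊆ Q'.carrier → Q ≠ Q' → ¬ c < F Q'}

/-- The bump constant `[U,V]_{p,q,α,ψ_θ,Φ,Ψ}` for the fractional integral. -/
def bumpFI (ρ : Rd d → ℝ) (θ α p q : ℝ) (Φ Ψ : ℝ → ℝ) (U V : Rd d → Mat n) : ℝ≥0∞ :=
  ⨆ Q : Cube d,
    Q.vol ^ (α / (d:ℝ) + 1/q - 1/p) * (ENNReal.ofReal (psi (θ/3) ρ Q))⁻¹ *
      orliczNormE Ψ Q (fun x =>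
        orliczNormE Φ Q (fun y => ENNReal.ofReal (opNorm (UV q U V x y))))

/-- The bump constant `[U,V]_{p,q,α,ψ_{θ'},Φ}` for the fractional maximal operator. -/
def bumpM (ρ : Rd d → ℝ) (θ' α p q : ℝ) (Φ : ℝ → ℝ) (U V : Rd d → Mat n) : ℝ≥0∞ :=
  ⨆ Q : Cube d,
    Q.vol ^ (α / (d:ℝ) + 1/q - 1/p) * (ENNReal.ofReal (psi (θ'/3) ρ Q)) ^ (α / (d:ℝ) - 1) *
      (Q.vol⁻¹ * ∫⁻ x in Q.carrier,
        (orliczNormE Φ Q (fun y => ENNReal.ofReal (opNorm (UV q U V x y)))) ^ q) ^ (1/q)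

end Paper
open Paper

section Sparse17Aux

namespace Paper

variable {d : ℕ}

/-! ### Geometry of cubes -/

lemma Cube.center_mem (Q : Cube d) : Q.center ∈ Q.carrier := by
  intro i
  have := Q.side_pos
  constructor <;> nlinarith

lemma Cube.carrier_eq (Q : Cube d) :
    Q.carrier = (MeasurableEquiv.toLp 2 (Fin d → ℝ)).symm ⁻¹'
      (Set.univ.pi fun i => Set.Ico (Q.center i - Q.side / 2) (Q.center i + Q.side / 2)) := by
  ext y
  simp [Cube.carrier, Set.mem_pi, MeasurableEquiv.toLp, Set.mem_Ico]
  rfl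

lemma Cube.measurable_carrier (Q : Cube d) : MeasurableSet Q.carrier := by
  rw [Q.carrier_eq]
  exact (MeasurableEquiv.toLp 2 (Fin d → ℝ)).symm.measurable
    (MeasurableSet.univ_pi fun i => measurableSet_Ico)

lemma Cube.vol_eq' (Q : Cube d) : Q.vol = ENNReal.ofReal (Q.side ^ d) := by
  have h := (EuclideanSpace.volume_preserving_symm_measurableEquiv_toLp (Fin d)).measure_preimage
    ((MeasurableSet.univ_pi fun i : Fin d => measurableSet_Ico
      (a := Q.center i - Q.side / 2) (b := Q.center i + Q.side / 2)).nullMeasurableSet)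
  rw [Cube.vol, Q.carrier_eq, h, volume_pi_pi]
  have : ∀ i : Fin d, volume (Set.Ico (Q.center i - Q.side / 2) (Q.center i + Q.side / 2))
      = ENNReal.ofReal Q.side := by
    intro i; rw [Real.volume_Ico]; ring_nf
  rw [Finset.prod_congr rfl fun i _ => this i, Finset.prod_const]
  simp [← ENNReal.ofReal_pow Q.side_pos.le]

lemma Cube.vol_pos' (Q : Cube d) : 0 < Q.vol := by
  rw [Q.vol_eq']; exact ENNReal.ofReal_pos.2 (pow_pos Q.side_pos d)

lemma Cube.vol_ne_top' (Q : Cube d) : Q.vol ≠ ⊤ := by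
  rw [Q.vol_eq']; exact ENNReal.ofReal_ne_top

lemma Cube.exists_coord (Q : Cube d) (i : Fin d) (t : ℝ)
    (ht : Q.center i - Q.side / 2 ≤ t ∧ t < Q.center i + Q.side / 2) :
    ∃ y ∈ Q.carrier, y i = t := by
  refine ⟨(WithLp.equiv 2 (Fin d → ℝ)).symm (fun j => if j = i then t else Q.center j), ?_, ?_⟩
  · intro j
    by_cases h : j = i
    · subst h; simpa using ht
    · have := Q.side_pos
      simp only [WithLp.equiv_symm_apply, WithLp.ofLp_toLp, if_neg h]
      constructor <;> nlinarith
  · simp [WithLp.equiv_symm_apply]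

lemma Cube.interval_subset {Q₁ Q₂ : Cube d} (h : Q₁.carrier ⊆ Q₂.carrier) (i : Fin d) :
    Set.Ico (Q₁.center i - Q₁.side / 2) (Q₁.center i + Q₁.side / 2) ⊆
      Set.Ico (Q₂.center i - Q₂.side / 2) (Q₂.center i + Q₂.side / 2) := by
  intro t ht
  obtain ⟨y, hy, rfl⟩ := Q₁.exists_coord i t ⟨ht.1, ht.2⟩
  exact Set.mem_Ico.2 (h hy i)

lemma Cube.side_le_of_subset {Q₁ Q₂ : Cube d} (hd : 0 < d) (h : Q₁.carrier ⊆ Q₂.carrier) :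
    Q₁.side ≤ Q₂.side := by
  obtain ⟨i⟩ : Nonempty (Fin d) := ⟨⟨0, hd⟩⟩
  have := Q₁.interval_subset h i
  rw [Set.Ico_subset_Ico_iff (by have := Q₁.side_pos; linarith)] at this
  linarith [this.1, this.2]

lemma Cube.eq_of_subset_of_side_eq {Q₁ Q₂ : Cube d} (h : Q₁.carrier ⊆ Q₂.carrier)
    (hs : Q₁.side = Q₂.side) : Q₁ = Q₂ := by
  obtain ⟨c₁, s₁, hp₁⟩ := Q₁
  obtain ⟨c₂, s₂, hp₂⟩ := Q₂
  simp only at hs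
  subst hs
  have hc : c₁ = c₂ := by
    have : ∀ i, c₁ i = c₂ i := by
      intro i
      have h2 := Cube.interval_subset (Q₁ := ⟨c₁, s₁, hp₁⟩) (Q₂ := ⟨c₂, s₁, hp₂⟩) h i
      rw [Set.Ico_subset_Ico_iff (by simp only; linarith)] at h2
      simp only at h2
      linarith [h2.1, h2.2]
    exact (WithLp.ext_iff 2).2 (funext this)
  subst hc; rfl

lemma Cube.exists_rat_mem (Q : Cube d) : ∃ q : Fin d → ℚ,
    (WithLp.equiv 2 (Fin d → ℝ)).symm (fun i => (q i : ℝ)) ∈ Q.carrier := by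
  have h : ∀ i : Fin d, ∃ q : ℚ, Q.center i - Q.side / 2 ≤ (q:ℝ) ∧
      (q:ℝ) < Q.center i + Q.side / 2 := by
    intro i
    obtain ⟨q, hq1, hq2⟩ := exists_rat_btwn
      (show Q.center i - Q.side / 2 < Q.center i + Q.side / 2 by
        have := Q.side_pos; linarith)
    exact ⟨q, hq1.le, hq2⟩
  choose q hq using h
  exact ⟨q, fun i => by simpa [WithLp.equiv_symm_apply] using hq i⟩

lemma countable_of_disjoint {S : Set (Cube d)}
    (h : ∀ P₁ ∈ S, ∀ P₂ ∈ S, P₁ ≠ P₂ → Disjoint P₁.carrier P₂.carrier) :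
    S.Countable := by
  have hex : ∀ P : Cube d, ∃ q : Fin d → ℚ,
      (WithLp.equiv 2 (Fin d → ℝ)).symm (fun i => (q i : ℝ)) ∈ P.carrier :=
    fun P => P.exists_rat_mem
  choose q hq using hex
  have hinj : Set.InjOn q S := by
    intro P₁ h₁ P₂ h₂ heq
    by_contra hne
    have hdisj := h P₁ h₁ P₂ h₂ hne
    have m2 : ((WithLp.equiv 2 (Fin d → ℝ)).symm fun i => ((q P₁ i : ℝ))) ∈ P₂.carrier := by
      rw [heq]; exact hq P₂
    exact (Set.disjoint_left.1 hdisj (hq P₁)) m2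
  exact Set.countable_of_injective_of_countable_image hinj (Set.to_countable _)

/-! ### Young function facts -/

lemma IsYoung.nonneg {Φ : ℝ → ℝ} (hΦ : IsYoung Φ) {s : ℝ} (hs : 0 ≤ s) : 0 ≤ Φ s := by
  have := hΦ.2.1 (Set.self_mem_Ici) (Set.mem_Ici.2 hs) hs
  rw [hΦ.2.2.2.1] at this; exact this

lemma IsYoung.bddAbove {Φ : ℝ → ℝ} (hΦ : IsYoung Φ) (t : ℝ) :
    BddAbove {y | ∃ s : ℝ, 0 < s ∧ y = s * t - Φ s} := by
  obtain ⟨s₀, hs₀⟩ := (hΦ.2.2.2.2.eventually_ge_atTop (|t| + 1)).exists_forall_of_atTop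
  refine ⟨(max s₀ 1) * |t|, ?_⟩
  rintro y ⟨s, hs, rfl⟩
  rcases le_or_gt s₀ s with h | h
  · have h1 : |t| + 1 ≤ Φ s / s := hs₀ s h
    have h2 : s * (|t| + 1) ≤ Φ s := by
      rw [le_div_iff₀ hs] at h1; nlinarith
    have : s * t ≤ s * |t| := by nlinarith [le_abs_self t]
    have hm : 0 ≤ max s₀ 1 * |t| := by positivity
    nlinarith
  · have h2 : 0 ≤ Φ s := hΦ.nonneg hs.le
    have h3 : s * t ≤ s * |t| := by nlinarith [le_abs_self t]
    have h4 : s ≤ max s₀ 1 := le_trans h.le (le_max_left _ _)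
    nlinarith [abs_nonneg t]

lemma conjSet_nonempty (Φ : ℝ → ℝ) (t : ℝ) :
    {y | ∃ s : ℝ, 0 < s ∧ y = s * t - Φ s}.Nonempty := ⟨1 * t - Φ 1, 1, one_pos, rfl⟩

lemma IsYoung.le_conj {Φ : ℝ → ℝ} (hΦ : IsYoung Φ) (t : ℝ) {s : ℝ} (hs : 0 < s) :
    s * t - Φ s ≤ youngConj Φ t :=
  le_csSup (hΦ.bddAbove t) ⟨s, hs, rfl⟩

lemma IsYoung.conj_mono {Φ : ℝ → ℝ} (hΦ : IsYoung Φ) {t₁ t₂ : ℝ} (h : t₁ ≤ t₂) :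
    youngConj Φ t₁ ≤ youngConj Φ t₂ := by
  refine csSup_le (conjSet_nonempty Φ t₁) ?_
  rintro y ⟨s, hs, rfl⟩
  calc s * t₁ - Φ s ≤ s * t₂ - Φ s := by nlinarith
    _ ≤ youngConj Φ t₂ := hΦ.le_conj t₂ hs

lemma IsYoung.conj_div {Φ : ℝ → ℝ} (hΦ : IsYoung Φ) {c : ℝ} (hc : 1 ≤ c) (t : ℝ) :
    youngConj Φ (t / c) ≤ youngConj Φ t / c := by
  refine csSup_le (conjSet_nonempty Φ _) ?_
  rintro y ⟨s, hs, rfl⟩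
  have h1 : s * t - Φ s ≤ youngConj Φ t := hΦ.le_conj t hs
  have h2 : 0 ≤ Φ s := hΦ.nonneg hs.le
  have hc0 : 0 < c := lt_of_lt_of_le one_pos hc
  rw [sub_le_iff_le_add, div_add' _ _ _ hc0.ne', le_div_iff₀ hc0]
  calc s * (t / c) * c = s * t := by field_simp
    _ ≤ youngConj Φ t + Φ s * c := by nlinarith

/-! ### Orlicz norm facts -/

lemma phiExt_ofReal_div (Ψ : ℝ → ℝ) {r lam : ℝ} (hr : 0 ≤ r) (hlam : 0 < lam) :
    phiExt Ψ (ENNReal.ofReal r / ENNReal.ofReal lam) = ENNReal.ofReal (Ψ (r / lam)) := by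
  rw [← ENNReal.ofReal_div_of_pos hlam, phiExt, if_neg ENNReal.ofReal_ne_top,
    ENNReal.toReal_ofReal (by positivity)]

lemma orliczNormE_le {Ψ : ℝ → ℝ} {Q : Cube d} {g : Rd d → ℝ≥0∞} {lam : ℝ} (hlam : 0 < lam)
    (h : ∫⁻ x in Q.carrier, phiExt Ψ (g x / ENNReal.ofReal lam) ≤ Q.vol) :
    orliczNormE Ψ Q g ≤ ENNReal.ofReal lam :=
  sInf_le ⟨lam, hlam, rfl, h⟩

lemma vol_lt_of_lt_orlicz {Ψ : ℝ → ℝ} {Q : Cube d} {g : Rd d → ℝ≥0∞} {lam : ℝ} (hlam : 0 < lam)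
    (h : ENNReal.ofReal lam < orliczNormE Ψ Q g) :
    Q.vol < ∫⁻ x in Q.carrier, phiExt Ψ (g x / ENNReal.ofReal lam) := by
  by_contra hc
  exact absurd (orliczNormE_le hlam (not_lt.1 hc)) (not_le.2 h)

lemma exists_lam_of_orlicz_lt {Ψ : ℝ → ℝ} {Q : Cube d} {g : Rd d → ℝ≥0∞} {b : ℝ}
    (h : orliczNormE Ψ Q g < ENNReal.ofReal b) :
    ∃ lam : ℝ, 0 < lam ∧ lam < b ∧
      ∫⁻ x in Q.carrier, phiExt Ψ (g x / ENNReal.ofReal lam) ≤ Q.vol := by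
  rw [orliczNormE, sInf_lt_iff] at h
  obtain ⟨l, ⟨lam, hlam, rfl, hint⟩, hlt⟩ := h
  exact ⟨lam, hlam, by
    rw [ENNReal.ofReal_lt_ofReal_iff_of_nonneg hlam.le] at hlt; exact hlt, hint⟩

lemma lintegral_phiExt_scale {Φ : ℝ → ℝ} (hΦ : IsYoung Φ) {c L : ℝ} (hc : 1 ≤ c) (hL : 0 < L)
    (u : Rd d → ℝ) (hu : ∀ x, 0 ≤ u x) (A : Set (Rd d)) :
    ∫⁻ x in A, phiExt (youngConj Φ) (ENNReal.ofReal (u x) / ENNReal.ofReal (c * L)) ≤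
      (ENNReal.ofReal c)⁻¹ *
        ∫⁻ x in A, phiExt (youngConj Φ) (ENNReal.ofReal (u x) / ENNReal.ofReal L) := by
  have hc0 : 0 < c := lt_of_lt_of_le one_pos hc
  rw [← lintegral_const_mul' _ _ (by simp [hc0])]
  refine lintegral_mono fun x => ?_
  rw [phiExt_ofReal_div _ (hu x) (mul_pos hc0 hL), phiExt_ofReal_div _ (hu x) hL]
  have h1 : u x / (c * L) = (u x / L) / c := by
    rw [div_div]; ring_nf
  rw [h1]
  calc ENNReal.ofReal (youngConj Φ (u x / L / c))
      ≤ ENNReal.ofReal (youngConj Φ (u x / L) / c) :=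
        ENNReal.ofReal_le_ofReal (hΦ.conj_div hc _)
    _ = (ENNReal.ofReal c)⁻¹ * ENNReal.ofReal (youngConj Φ (u x / L)) := by
        rw [ENNReal.ofReal_div_of_pos hc0, div_eq_mul_inv, mul_comm]

/-! ### dyadic grid facts -/

lemma maximalAbove_disjoint {𝒟 : Set (Cube d)} (h𝒟 : IsDyadicGrid 𝒟)
    (F : Cube d → ℝ≥0∞) (c : ℝ≥0∞) :
    ∀ P₁ ∈ maximalAbove 𝒟 F c, ∀ P₂ ∈ maximalAbove 𝒟 F c, P₁ ≠ P₂ →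
      Disjoint P₁.carrier P₂.carrier := by
  intro P₁ h₁ P₂ h₂ hne
  rcases h𝒟.2.1 P₁ h₁.1 P₂ h₂.1 with h | h | h
  · exact absurd h₂.2.1 (h₁.2.2 P₂ h₂.1 h hne)
  · exact absurd h₁.2.1 (h₂.2.2 P₁ h₁.1 h (Ne.symm hne))
  · exact h

lemma exists_parent {𝒟 : Set (Cube d)} (hd : 0 < d) (h𝒟 : IsDyadicGrid 𝒟)
    {Q : Cube d} (hQ : Q ∈ 𝒟) :
    ∃ P ∈ 𝒟, Q.carrier ⊆ P.carrier ∧ Q ≠ P ∧ P.side = 2 * Q.side := by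
  obtain ⟨j, hj⟩ := h𝒟.1 Q hQ
  obtain ⟨P, ⟨hP𝒟, hPside, hPmem⟩, _⟩ := h𝒟.2.2 (j + 1) Q.center
  have hside : P.side = 2 * Q.side := by
    rw [hPside, hj, zpow_add_one₀ (by norm_num : (2:ℝ) ≠ 0)]; ring
  have hQP : Q.carrier ⊆ P.carrier := by
    rcases h𝒟.2.1 Q hQ P hP𝒟 with h | h | h
    · exact h
    · exfalso
      have := Cube.side_le_of_subset hd h
      have := Q.side_pos
      linarith [hside]
    · exact absurd (h.ne_of_mem Q.center_mem hPmem) (by simp)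
  have hne : Q ≠ P := by
    intro h
    rw [← h] at hside
    have := Q.side_pos
    linarith
  exact ⟨P, hP𝒟, hQP, hne, hside⟩

end Paper

end Sparse17Aux

section Sparse17Main

namespace Paper

variable {d : ℕ} {𝒟 : Set (Cube d)} {Φ : ℝ → ℝ} {u : Rd d → ℝ}

lemma stopping_int (hd : 0 < d) (h𝒟 : IsDyadicGrid 𝒟) (hΦ : IsYoung Φ)
    (hu : ∀ x, 0 ≤ u x) {k : ℤ} {Q : Cube d}
    (hQ : Q ∈ maximalAbove 𝒟
      (fun P => orliczNormE (youngConj Φ) P fun x => ENNReal.ofReal (u x))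
      (ENNReal.ofReal (((2:ℝ) ^ (d + 3)) ^ k))) :
    ∫⁻ x in Q.carrier, phiExt (youngConj Φ)
        (ENNReal.ofReal (u x) / ENNReal.ofReal ((2:ℝ) ^ (d+1) * ((2:ℝ) ^ (d + 3)) ^ k))
      ≤ Q.vol := by
  have ha0 : (0:ℝ) < 2 ^ (d + 3) := by positivity
  have hak : (0:ℝ) < ((2:ℝ) ^ (d + 3)) ^ k := zpow_pos ha0 k
  obtain ⟨P, hP𝒟, hQP, hQneP, hPside⟩ := exists_parent hd h𝒟 hQ.1
  have hFP : orliczNormE (youngConj Φ) P (fun x => ENNReal.ofReal (u x))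
      ≤ ENNReal.ofReal (((2:ℝ) ^ (d + 3)) ^ k) := not_lt.1 (hQ.2.2 P hP𝒟 hQP hQneP)
  have hFP2 : orliczNormE (youngConj Φ) P (fun x => ENNReal.ofReal (u x))
      < ENNReal.ofReal (2 * ((2:ℝ) ^ (d + 3)) ^ k) :=
    lt_of_le_of_lt hFP ((ENNReal.ofReal_lt_ofReal_iff (by linarith)).2 (by linarith))
  obtain ⟨lam, hlam0, hlam2, hint⟩ := exists_lam_of_orlicz_lt hFP2
  set c : ℝ := (2:ℝ) ^ (d+1) * ((2:ℝ) ^ (d + 3)) ^ k / lam with hc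
  have hcd : (2:ℝ) ^ d ≤ c := by
    rw [hc, le_div_iff₀ hlam0]
    have h2 : (2:ℝ) ^ (d+1) = 2 * 2 ^ d := by rw [pow_succ]; ring
    nlinarith [pow_pos (show (0:ℝ) < 2 by norm_num) d]
  have hc1 : (1:ℝ) ≤ c := le_trans (one_le_pow₀ (by norm_num)) hcd
  have hcl : c * lam = (2:ℝ) ^ (d+1) * ((2:ℝ) ^ (d + 3)) ^ k := by
    rw [hc, div_mul_cancel₀ _ hlam0.ne']
  have hc0 : (0:ℝ) < c := lt_of_lt_of_le one_pos hc1
  have hPvol : P.vol = ENNReal.ofReal ((2:ℝ) ^ d) * Q.vol := by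
    rw [P.vol_eq', Q.vol_eq', hPside, mul_pow, ← ENNReal.ofReal_mul (by positivity)]
  rw [← hcl]
  calc ∫⁻ x in Q.carrier, phiExt (youngConj Φ)
        (ENNReal.ofReal (u x) / ENNReal.ofReal (c * lam))
      ≤ ∫⁻ x in P.carrier, phiExt (youngConj Φ)
        (ENNReal.ofReal (u x) / ENNReal.ofReal (c * lam)) := lintegral_mono_set hQP
    _ ≤ (ENNReal.ofReal c)⁻¹ * ∫⁻ x in P.carrier, phiExt (youngConj Φ)
        (ENNReal.ofReal (u x) / ENNReal.ofReal lam) :=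
          lintegral_phiExt_scale hΦ hc1 hlam0 u hu P.carrier
    _ ≤ (ENNReal.ofReal c)⁻¹ * P.vol := mul_le_mul_right hint _
    _ = (ENNReal.ofReal c)⁻¹ * ENNReal.ofReal ((2:ℝ) ^ d) * Q.vol := by
        rw [hPvol, mul_assoc]
    _ ≤ 1 * Q.vol := by
        refine mul_le_mul_left ?_ _
        calc (ENNReal.ofReal c)⁻¹ * ENNReal.ofReal ((2:ℝ) ^ d)
            ≤ (ENNReal.ofReal c)⁻¹ * ENNReal.ofReal c :=
              mul_le_mul_right (ENNReal.ofReal_le_ofReal hcd) _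
          _ = 1 := ENNReal.inv_mul_cancel (by simp [hc0]) ENNReal.ofReal_ne_top
    _ = Q.vol := one_mul _

lemma stopping_F_le (hd : 0 < d) (h𝒟 : IsDyadicGrid 𝒟) (hΦ : IsYoung Φ)
    (hu : ∀ x, 0 ≤ u x) {k : ℤ} {Q : Cube d}
    (hQ : Q ∈ maximalAbove 𝒟
      (fun P => orliczNormE (youngConj Φ) P fun x => ENNReal.ofReal (u x))
      (ENNReal.ofReal (((2:ℝ) ^ (d + 3)) ^ k))) :
    orliczNormE (youngConj Φ) Q (fun x => ENNReal.ofReal (u x))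
      ≤ ENNReal.ofReal (((2:ℝ) ^ (d + 3)) ^ (k + 1)) := by
  have ha0 : (0:ℝ) < 2 ^ (d + 3) := by positivity
  have hak : (0:ℝ) < ((2:ℝ) ^ (d + 3)) ^ k := zpow_pos ha0 k
  have hle : (2:ℝ) ^ (d+1) * ((2:ℝ) ^ (d + 3)) ^ k ≤ ((2:ℝ) ^ (d + 3)) ^ (k + 1) := by
    rw [zpow_add_one₀ ha0.ne']
    have : (2:ℝ) ^ (d+1) ≤ 2 ^ (d+3) := pow_le_pow_right₀ (by norm_num) (by omega)
    nlinarith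
  refine le_trans (orliczNormE_le (by positivity) (stopping_int hd h𝒟 hΦ hu hQ))
    (ENNReal.ofReal_le_ofReal hle)

lemma stopping_quarter (hd : 0 < d) (h𝒟 : IsDyadicGrid 𝒟) (hΦ : IsYoung Φ)
    (hu : ∀ x, 0 ≤ u x) {k : ℤ} {Q : Cube d}
    (hQ : Q ∈ maximalAbove 𝒟
      (fun P => orliczNormE (youngConj Φ) P fun x => ENNReal.ofReal (u x))
      (ENNReal.ofReal (((2:ℝ) ^ (d + 3)) ^ k))) :
    ∫⁻ x in Q.carrier, phiExt (youngConj Φ)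
        (ENNReal.ofReal (u x) / ENNReal.ofReal (((2:ℝ) ^ (d + 3)) ^ (k + 1)))
      ≤ Q.vol / 4 := by
  have ha0 : (0:ℝ) < 2 ^ (d + 3) := by positivity
  have hak : (0:ℝ) < ((2:ℝ) ^ (d + 3)) ^ k := zpow_pos ha0 k
  have h4 : ((2:ℝ) ^ (d + 3)) ^ (k + 1) = 4 * ((2:ℝ) ^ (d+1) * ((2:ℝ) ^ (d + 3)) ^ k) := by
    rw [zpow_add_one₀ ha0.ne']
    have : (2:ℝ) ^ (d + 3) = 2 ^ (d+1) * 4 := by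
      rw [show d + 3 = (d+1) + 2 by omega, pow_add]; norm_num
    rw [this]; ring
  rw [h4]
  calc ∫⁻ x in Q.carrier, phiExt (youngConj Φ)
        (ENNReal.ofReal (u x) /
          ENNReal.ofReal (4 * ((2:ℝ) ^ (d+1) * ((2:ℝ) ^ (d + 3)) ^ k)))
      ≤ (ENNReal.ofReal 4)⁻¹ * ∫⁻ x in Q.carrier, phiExt (youngConj Φ)
          (ENNReal.ofReal (u x) / ENNReal.ofReal ((2:ℝ) ^ (d+1) * ((2:ℝ) ^ (d + 3)) ^ k)) :=
        lintegral_phiExt_scale hΦ (by norm_num) (by positivity) u hu Q.carrier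
    _ ≤ (ENNReal.ofReal 4)⁻¹ * Q.vol := mul_le_mul_right (stopping_int hd h𝒟 hΦ hu hQ) _
    _ = Q.vol / 4 := by
        rw [div_eq_mul_inv, mul_comm]
        norm_num

lemma sparse_part1 (hd : 0 < d) (h𝒟 : IsDyadicGrid 𝒟) (hΦ : IsYoung Φ)
    (hu : ∀ x, 0 ≤ u x) {k : ℤ} {Q : Cube d}
    (hQ : Q ∈ maximalAbove 𝒟
      (fun P => orliczNormE (youngConj Φ) P fun x => ENNReal.ofReal (u x))
      (ENNReal.ofReal (((2:ℝ) ^ (d + 3)) ^ k))) :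
    volume (Q.carrier ∩ ⋃ P ∈ maximalAbove 𝒟
        (fun P => orliczNormE (youngConj Φ) P fun x => ENNReal.ofReal (u x))
        (ENNReal.ofReal (((2:ℝ) ^ (d + 3)) ^ (k+1))), P.carrier) ≤ Q.vol / 2 := by
  have ha0 : (0:ℝ) < 2 ^ (d + 3) := by positivity
  have ha1 : (1:ℝ) ≤ 2 ^ (d + 3) := one_le_pow₀ (by norm_num)
  have hak1 : (0:ℝ) < ((2:ℝ) ^ (d + 3)) ^ (k+1) := zpow_pos ha0 _
  set G : Cube d → ℝ≥0∞ :=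
    fun P => orliczNormE (youngConj Φ) P fun x => ENNReal.ofReal (u x) with hG
  set S : Set (Cube d) := {P | P ∈ maximalAbove 𝒟 G (ENNReal.ofReal (((2:ℝ) ^ (d + 3)) ^ (k+1)))
    ∧ P.carrier ⊆ Q.carrier} with hS
  have hdisj : ∀ P₁ ∈ S, ∀ P₂ ∈ S, P₁ ≠ P₂ → Disjoint P₁.carrier P₂.carrier :=
    fun P₁ h₁ P₂ h₂ hne => maximalAbove_disjoint h𝒟 G _ P₁ h₁.1 P₂ h₂.1 hne
  have hScount : S.Countable := countable_of_disjoint hdisj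
  have hpair : S.PairwiseDisjoint Cube.carrier := fun P₁ h₁ P₂ h₂ hne => hdisj P₁ h₁ P₂ h₂ hne
  have hsub : Q.carrier ∩ (⋃ P ∈ maximalAbove 𝒟 G
        (ENNReal.ofReal (((2:ℝ) ^ (d + 3)) ^ (k+1))), P.carrier)
      ⊆ ⋃ P ∈ S, P.carrier := by
    rintro x ⟨hxQ, hxU⟩
    simp only [Set.mem_iUnion, exists_prop] at hxU ⊢
    obtain ⟨P, hP, hxP⟩ := hxU
    refine ⟨P, ⟨hP, ?_⟩, hxP⟩
    rcases h𝒟.2.1 P hP.1 Q hQ.1 with h | h | h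
    · exact h
    · by_cases heq : Q = P
      · rw [heq]
      · exfalso
        refine hQ.2.2 P hP.1 h heq (lt_of_le_of_lt ?_ hP.2.1)
        exact ENNReal.ofReal_le_ofReal (zpow_le_zpow_right₀ ha1 (by omega))
    · exact absurd (h.ne_of_mem hxP hxQ) (by simp)
  calc volume (Q.carrier ∩ ⋃ P ∈ maximalAbove 𝒟 G
        (ENNReal.ofReal (((2:ℝ) ^ (d + 3)) ^ (k+1))), P.carrier)
      ≤ volume (⋃ P ∈ S, P.carrier) := measure_mono hsub
    _ ≤ ∑' P : S, volume P.1.carrier := measure_biUnion_le volume hScount _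
    _ ≤ ∑' P : S, ∫⁻ x in P.1.carrier, phiExt (youngConj Φ)
          (ENNReal.ofReal (u x) / ENNReal.ofReal (((2:ℝ) ^ (d + 3)) ^ (k+1))) :=
        ENNReal.tsum_le_tsum fun P => (vol_lt_of_lt_orlicz hak1 P.2.1.2.1).le
    _ = ∫⁻ x in ⋃ P ∈ S, P.carrier, phiExt (youngConj Φ)
          (ENNReal.ofReal (u x) / ENNReal.ofReal (((2:ℝ) ^ (d + 3)) ^ (k+1))) :=
        (lintegral_biUnion hScount (fun P _ => P.measurable_carrier) hpair _).symm
    _ ≤ ∫⁻ x in Q.carrier, phiExt (youngConj Φ)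
          (ENNReal.ofReal (u x) / ENNReal.ofReal (((2:ℝ) ^ (d + 3)) ^ (k+1))) :=
        lintegral_mono_set (Set.iUnion₂_subset fun P hP => hP.2)
    _ ≤ Q.vol / 4 := stopping_quarter hd h𝒟 hΦ hu hQ
    _ ≤ Q.vol / 2 := ENNReal.div_le_div_left (by norm_num) _

lemma key_subset (hd : 0 < d) (h𝒟 : IsDyadicGrid 𝒟) (hΦ : IsYoung Φ)
    (hu : ∀ x, 0 ≤ u x) {kQ k' : ℤ} {Q Q' : Cube d}
    (hQ : Q ∈ maximalAbove 𝒟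
      (fun P => orliczNormE (youngConj Φ) P fun x => ENNReal.ofReal (u x))
      (ENNReal.ofReal (((2:ℝ) ^ (d + 3)) ^ kQ)))
    (hQ' : Q' ∈ maximalAbove 𝒟
      (fun P => orliczNormE (youngConj Φ) P fun x => ENNReal.ofReal (u x))
      (ENNReal.ofReal (((2:ℝ) ^ (d + 3)) ^ k')))
    (hne : Q' ≠ Q) (hsub : Q'.carrier ⊆ Q.carrier) :
    ∃ P ∈ maximalAbove 𝒟
      (fun P => orliczNormE (youngConj Φ) P fun x => ENNReal.ofReal (u x))
      (ENNReal.ofReal (((2:ℝ) ^ (d + 3)) ^ (kQ + 1))), Q'.carrier ⊆ P.carrier := by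
  have ha0 : (0:ℝ) < 2 ^ (d + 3) := by positivity
  have ha1 : (1:ℝ) < 2 ^ (d + 3) := one_lt_pow₀ (by norm_num) (by omega)
  set G : Cube d → ℝ≥0∞ :=
    fun P => orliczNormE (youngConj Φ) P fun x => ENNReal.ofReal (u x) with hG
  have hFQle : G Q ≤ ENNReal.ofReal (((2:ℝ) ^ (d + 3)) ^ k') :=
    not_lt.1 (hQ'.2.2 Q hQ.1 hsub hne)
  have hkk : kQ < k' := by
    have h1 : ENNReal.ofReal (((2:ℝ) ^ (d + 3)) ^ kQ)
        < ENNReal.ofReal (((2:ℝ) ^ (d + 3)) ^ k') := lt_of_lt_of_le hQ.2.1 hFQle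
    rw [ENNReal.ofReal_lt_ofReal_iff (zpow_pos ha0 _)] at h1
    exact (zpow_lt_zpow_iff_right₀ ha1).1 h1
  have hQ'high : ENNReal.ofReal (((2:ℝ) ^ (d + 3)) ^ (kQ + 1)) < G Q' :=
    lt_of_le_of_lt (ENNReal.ofReal_le_ofReal (zpow_le_zpow_right₀ ha1.le (by omega))) hQ'.2.1
  have hFQhigh : G Q ≤ ENNReal.ofReal (((2:ℝ) ^ (d + 3)) ^ (kQ + 1)) :=
    stopping_F_le hd h𝒟 hΦ hu hQ
  set T : Set (Cube d) := {P | P ∈ 𝒟 ∧ Q'.carrier ⊆ P.carrier ∧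
    ENNReal.ofReal (((2:ℝ) ^ (d + 3)) ^ (kQ + 1)) < G P} with hT
  have hQ'T : Q' ∈ T := ⟨hQ'.1, subset_rfl, hQ'high⟩
  have hTQ : ∀ P ∈ T, P.carrier ⊆ Q.carrier ∧ P ≠ Q := by
    rintro P ⟨hP𝒟, hQ'P, hFP⟩
    have hPneQ : P ≠ Q := by
      intro h
      rw [h] at hFP
      exact absurd hFQhigh (not_le.2 hFP)
    rcases h𝒟.2.1 P hP𝒟 Q hQ.1 with h | h | h
    · exact ⟨h, hPneQ⟩
    · exfalso
      refine hQ.2.2 P hP𝒟 h (Ne.symm hPneQ) (lt_of_le_of_lt ?_ hFP)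
      exact ENNReal.ofReal_le_ofReal (zpow_le_zpow_right₀ ha1.le (by omega))
    · exact absurd (h.ne_of_mem (hQ'P Q'.center_mem) (hsub Q'.center_mem)) (by simp)
  obtain ⟨jQ, hjQ⟩ := h𝒟.1 Q hQ.1
  obtain ⟨jQ', hjQ'⟩ := h𝒟.1 Q' hQ'.1
  have hbdd : ∃ b : ℤ, ∀ j : ℤ, (∃ P ∈ T, P.side = (2:ℝ) ^ j) → j ≤ b := by
    refine ⟨jQ, ?_⟩
    rintro j ⟨P, hPT, hPs⟩
    have hle : P.side ≤ Q.side := Cube.side_le_of_subset hd (hTQ P hPT).1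
    rw [hPs, hjQ] at hle
    exact (zpow_le_zpow_iff_right₀ (by norm_num : (1:ℝ) < 2)).1 hle
  obtain ⟨js, ⟨Ps, hPsT, hPsside⟩, hub⟩ :=
    Int.exists_greatest_of_bdd hbdd ⟨jQ', Q', hQ'T, hjQ'⟩
  refine ⟨Ps, ⟨hPsT.1, hPsT.2.2, ?_⟩, hPsT.2.1⟩
  intro P'' hP''𝒟 hsub'' hne'' hF''
  have hP''T : P'' ∈ T := ⟨hP''𝒟, hPsT.2.1.trans hsub'', hF''⟩
  obtain ⟨j'', hj''⟩ := h𝒟.1 P'' hP''𝒟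
  have hj''le : j'' ≤ js := hub j'' ⟨P'', hP''T, hj''⟩
  have hside1 : P''.side ≤ Ps.side := by
    rw [hj'', hPsside]
    exact zpow_le_zpow_right₀ (by norm_num) hj''le
  have hside2 : Ps.side ≤ P''.side := Cube.side_le_of_subset hd hsub''
  exact hne'' (Cube.eq_of_subset_of_side_eq hsub'' (le_antisymm hside2 hside1))

lemma sparse_part2 (hd : 0 < d) (h𝒟 : IsDyadicGrid 𝒟) (hΦ : IsYoung Φ)
    (hu : ∀ x, 0 ≤ u x) :
    ∃ E : Cube d → Set (Rd d),
      (∀ Q ∈ ⋃ k : ℤ, maximalAbove 𝒟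
          (fun P => orliczNormE (youngConj Φ) P (fun x => ENNReal.ofReal (u x)))
          (ENNReal.ofReal (((2:ℝ) ^ (d + 3)) ^ k)),
        E Q ⊆ Q.carrier ∧ MeasurableSet (E Q) ∧ Q.vol / 2 ≤ volume (E Q)) ∧
      Set.PairwiseDisjoint (⋃ k : ℤ, maximalAbove 𝒟
          (fun P => orliczNormE (youngConj Φ) P (fun x => ENNReal.ofReal (u x)))
          (ENNReal.ofReal (((2:ℝ) ^ (d + 3)) ^ k))) E := by
  classical
  set G : Cube d → ℝ≥0∞ :=
    fun P => orliczNormE (youngConj Φ) P fun x => ENNReal.ofReal (u x) with hG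
  set Sk : ℤ → Set (Cube d) :=
    fun k => maximalAbove 𝒟 G (ENNReal.ofReal (((2:ℝ) ^ (d + 3)) ^ k)) with hSk
  have hex : ∀ Q : Cube d, ∃ k : ℤ, Q ∈ (⋃ k : ℤ, Sk k) → Q ∈ Sk k := by
    intro Q
    by_cases h : Q ∈ ⋃ k : ℤ, Sk k
    · obtain ⟨k, hk⟩ := Set.mem_iUnion.1 h
      exact ⟨k, fun _ => hk⟩
    · exact ⟨0, fun hh => absurd hh h⟩
  choose kq hkq using hex
  refine ⟨fun Q => Q.carrier \ ⋃ P ∈ Sk (kq Q + 1), P.carrier, ?_, ?_⟩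
  · intro Q hQ
    have hQm : Q ∈ Sk (kq Q) := hkq Q hQ
    refine ⟨Set.diff_subset, ?_, ?_⟩
    · exact Q.measurable_carrier.diff (MeasurableSet.biUnion
        (countable_of_disjoint (maximalAbove_disjoint h𝒟 G _))
        fun P _ => P.measurable_carrier)
    · have h1 : volume (Q.carrier ∩ ⋃ P ∈ Sk (kq Q + 1), P.carrier) ≤ Q.vol / 2 :=
        sparse_part1 hd h𝒟 hΦ hu hQm
      have h2 : Q.vol ≤ volume (Q.carrier \ ⋃ P ∈ Sk (kq Q + 1), P.carrier)
          + volume (Q.carrier ∩ ⋃ P ∈ Sk (kq Q + 1), P.carrier) := by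
        refine le_trans (measure_mono ?_) (measure_union_le _ _)
        intro x hx
        by_cases h : x ∈ ⋃ P ∈ Sk (kq Q + 1), P.carrier
        · exact Or.inr ⟨hx, h⟩
        · exact Or.inl ⟨hx, h⟩
      have h3 : Q.vol - Q.vol / 2 ≤ volume (Q.carrier \ ⋃ P ∈ Sk (kq Q + 1), P.carrier) :=
        tsub_le_iff_right.2 (h2.trans (add_le_add_right h1 _))
      rwa [ENNReal.sub_half Q.vol_ne_top'] at h3
  · intro Q hQ Q' hQ' hne
    have hQm : Q ∈ Sk (kq Q) := hkq Q hQ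
    have hQ'm : Q' ∈ Sk (kq Q') := hkq Q' hQ'
    have key : ∀ A B : Cube d, (A ∈ Sk (kq A)) → (B ∈ Sk (kq B)) → B ≠ A →
        B.carrier ⊆ A.carrier →
        Disjoint (A.carrier \ ⋃ P ∈ Sk (kq A + 1), P.carrier)
          (B.carrier \ ⋃ P ∈ Sk (kq B + 1), P.carrier) := by
      intro A B hA hB hBA hsub
      obtain ⟨P, hPmem, hBP⟩ := key_subset hd h𝒟 hΦ hu hA hB hBA hsub
      rw [Set.disjoint_left]
      rintro x ⟨hxA, hxNU⟩ ⟨hxB, _⟩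
      exact hxNU (Set.mem_biUnion hPmem (hBP hxB))
    rcases h𝒟.2.1 Q hQm.1 Q' hQ'm.1 with h | h | h
    · exact (key Q' Q hQ'm hQm hne h).symm
    · exact key Q Q' hQm hQ'm (Ne.symm hne) h
    · exact Set.disjoint_of_subset Set.diff_subset Set.diff_subset h

end Paper

end Sparse17Main

/-- the stopping cubes form a `1/2`-sparse family. -/
theorem statement_17 (d n : ℕ) (hd : 1 ≤ d)
    (𝒟 : Set (Cube d)) (h𝒟 : IsDyadicGrid 𝒟)
    (Φ : ℝ → ℝ) (hΦ : IsYoung Φ)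
    (f : Rd d → Cn n) (hf : StronglyMeasurable f)
    (hbd : ∃ M : ℝ, ∀ x, ‖f x‖ ≤ M) (hcs : HasCompactSupport f) :
    (∀ k : ℤ, ∀ Q ∈ maximalAbove 𝒟
        (fun P => orliczNormE (youngConj Φ) P (fun x => ENNReal.ofReal ‖f x‖))
        (ENNReal.ofReal (((2:ℝ) ^ (d + 3)) ^ k)),
      volume (Q.carrier ∩ ⋃ P ∈ maximalAbove 𝒟
        (fun P => orliczNormE (youngConj Φ) P (fun x => ENNReal.ofReal ‖f x‖))
        (ENNReal.ofReal (((2:ℝ) ^ (d + 3)) ^ (k+1))), P.carrier) ≤ Q.vol / 2) ∧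
    ∃ E : Cube d → Set (Rd d),
      (∀ Q ∈ ⋃ k : ℤ, maximalAbove 𝒟
          (fun P => orliczNormE (youngConj Φ) P (fun x => ENNReal.ofReal ‖f x‖))
          (ENNReal.ofReal (((2:ℝ) ^ (d + 3)) ^ k)),
        E Q ⊆ Q.carrier ∧ MeasurableSet (E Q) ∧ Q.vol / 2 ≤ volume (E Q)) ∧
      Set.PairwiseDisjoint (⋃ k : ℤ, maximalAbove 𝒟
          (fun P => orliczNormE (youngConj Φ) P (fun x => ENNReal.ofReal ‖f x‖))
          (ENNReal.ofReal (((2:ℝ) ^ (d + 3)) ^ k))) E := by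
  refine ⟨fun k Q hQ => sparse_part1 hd h𝒟 hΦ (fun x => norm_nonneg (f x)) hQ,
    sparse_part2 hd h𝒟 hΦ (fun x => norm_nonneg (f x))⟩
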